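/- Let 𝒳 be a finite alphabet, let v^N ∈ 𝒳^N have type Q₁ and w^n ∈ 𝒳^n have type Q₂. Then for every P ∈ 𝒫(𝒳), the product probability satisfies P^{⊗(N+n)}(v^N, w^n) ≤ exp( −n·GJS(Q₁, Q₂, N/n) − N·H(Q₁) − n·H(Q₂) ), with equality when P = ((N/n)·Q₁ + Q₂)/(1 + N/n). In particular, the minimum over P ∈ 𝒫(𝒳) of −(1/n)·log P^{⊗(N+n)}(v^N, w^n) is bounded below by GJS(Q₁, Q₂, N/n) plus (N/n)·H(Q₁) + H(Q₂), attained at P = ((N/n)·Q₁ + Q₂)/(1 + N/n). -/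

import Mathlib

/-!
Concatenating `v` and `w` gives a sequence of length `N + n` whose type is the mixture
`P_α = (α Q₁ + Q₂)/(1 + α)`, `α = N/n`, and `P^{⊗(N+n)}(v, w) = ∏ₐ P(a)^{count(a)}`. By weighted
AM–GM this likelihood is maximal when `P` is the type itself, where it equals
`exp(-(N + n) H(P_α))`. Expanding each divergence as cross entropy minus entropy gives
`(N + n) H(P_α) = n GJS(Q₁, Q₂, α) + N H(Q₁) + n H(Q₂)`.
-/

open Filter

namespace SeqClass

variable {𝒳 : Type*} [Fintype 𝒳] [DecidableEq 𝒳]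

/-- `P` is a probability mass function on `𝒳`. -/
def IsPMF (P : 𝒳 → ℝ) : Prop := (∀ x, 0 ≤ P x) ∧ ∑ x, P x = 1

/-- `P` has full support. -/
def FullSupport (P : 𝒳 → ℝ) : Prop := ∀ x, 0 < P x

/-- Kullback–Leibler divergence `D(P‖Q)`. -/
noncomputable def KL (P Q : 𝒳 → ℝ) : ℝ := ∑ x, P x * Real.log (P x / Q x)

/-- Shannon entropy `H(P)`. -/
noncomputable def shEnt (P : 𝒳 → ℝ) : ℝ := -∑ x, P x * Real.log (P x)

/-- The mixture `(α•P + Q)/(1+α)`. -/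
noncomputable def mix (P Q : 𝒳 → ℝ) (α : ℝ) : 𝒳 → ℝ := fun x => (α * P x + Q x) / (1 + α)

/-- Generalized Jensen–Shannon divergence `GJS(P,Q,α) = α D(P‖P_α) + D(Q‖P_α)`. -/
noncomputable def GJS (P Q : 𝒳 → ℝ) (α : ℝ) : ℝ := α * KL P (mix P Q α) + KL Q (mix P Q α)

/-- Chernoff information `C(P,Q)`. -/
noncomputable def chernoff (P Q : 𝒳 → ℝ) : ℝ :=
  -(⨅ η : (Set.Icc (0:ℝ) 1), Real.log (∑ x, P x ^ (η : ℝ) * Q x ^ (1 - (η : ℝ))))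

/-- Empirical distribution (type) of a finite sequence. -/
noncomputable def empDist {n : ℕ} (x : Fin n → 𝒳) : 𝒳 → ℝ :=
  fun a => ((Finset.univ.filter fun i => x i = a).card : ℝ) / n

/-- Type of the length-`n` prefix of `y`. -/
noncomputable def prefixType {m : ℕ} (y : Fin m → 𝒳) (n : ℕ) : 𝒳 → ℝ :=
  fun a => ((Finset.univ.filter fun k : Fin m => (k : ℕ) < n ∧ y k = a).card : ℝ) / n

/-- i.i.d. product probability of a finite sequence. -/
noncomputable def prodProb {n : ℕ} (P : 𝒳 → ℝ) (x : Fin n → 𝒳) : ℝ := ∏ i, P (x i)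

end SeqClass

-- reopened without the instance variables, so that each lemma assumes only the instances it uses
namespace SeqClass

variable {𝒳 : Type*}

section Counting

variable [DecidableEq 𝒳]

def count {m : ℕ} (x : Fin m → 𝒳) (a : 𝒳) : ℕ := (Finset.univ.filter fun i => x i = a).card

lemma empDist_apply {m : ℕ} (x : Fin m → 𝒳) (a : 𝒳) : empDist x a = count x a / m := rfl

lemma empDist_nonneg {m : ℕ} (x : Fin m → 𝒳) (a : 𝒳) : 0 ≤ empDist x a := by
  rw [empDist_apply]; positivity

lemma count_le {m : ℕ} (x : Fin m → 𝒳) (a : 𝒳) : count x a ≤ m :=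
  (Finset.card_filter_le _ _).trans_eq (Finset.card_fin m)

lemma empDist_pos {m : ℕ} {x : Fin m → 𝒳} {a : 𝒳} (ha : count x a ≠ 0) : 0 < empDist x a := by
  have : 0 < m := (Nat.pos_of_ne_zero ha).trans_le (count_le x a)
  rw [empDist_apply]; positivity

lemma natCast_mul_empDist {m : ℕ} (x : Fin m → 𝒳) (a : 𝒳) :
    (m : ℝ) * empDist x a = count x a := by
  rcases Nat.eq_zero_or_pos m with rfl | hm
  · simp [count]
  · rw [empDist_apply, mul_div_cancel₀ _ (by positivity)]

lemma sum_count [Fintype 𝒳] {m : ℕ} (x : Fin m → 𝒳) : ∑ a, count x a = m := by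
  simp only [count]
  rw [← Finset.card_eq_sum_card_fiberwise fun i _ => Finset.mem_univ (x i), Finset.card_fin]

lemma count_append {N n : ℕ} (v : Fin N → 𝒳) (w : Fin n → 𝒳) (a : 𝒳) :
    count (Fin.append v w) a = count v a + count w a := by
  simp only [count, Finset.card_filter, Fin.sum_univ_add, Fin.append_left, Fin.append_right]

lemma empDist_append {N n : ℕ} (v : Fin N → 𝒳) (w : Fin n → 𝒳) (hn : n ≠ 0) :
    empDist (Fin.append v w) = mix (empDist v) (empDist w) ((N : ℝ) / n) := by
  have hn' : (n : ℝ) ≠ 0 := Nat.cast_ne_zero.mpr hn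
  ext a
  rw [empDist_apply, count_append, mix, Nat.cast_add, Nat.cast_add, ← natCast_mul_empDist v,
    ← natCast_mul_empDist w]
  field_simp
  ring

end Counting

lemma prodProb_append {N n : ℕ} (P : 𝒳 → ℝ) (v : Fin N → 𝒳) (w : Fin n → 𝒳) :
    prodProb P (Fin.append v w) = prodProb P v * prodProb P w := by
  simp only [prodProb, Fin.prod_univ_add, Fin.append_left, Fin.append_right]

lemma prodProb_eq_prod_pow_count [Fintype 𝒳] [DecidableEq 𝒳] {m : ℕ} (P : 𝒳 → ℝ)
    (x : Fin m → 𝒳) : prodProb P x = ∏ a, P a ^ count x a := by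
  rw [prodProb, ← Finset.prod_fiberwise' Finset.univ x P]
  exact Finset.prod_congr rfl fun a _ => Finset.prod_const _

theorem prod_pow_le_prod_frequency_pow {ι : Type*} (s : Finset ι) (k : ι → ℕ) {p : ι → ℝ}
    (hp : ∀ i ∈ s, 0 ≤ p i) (hp_sum : ∑ i ∈ s, p i ≤ 1) :
    ∏ i ∈ s, p i ^ k i ≤ ∏ i ∈ s, ((k i : ℝ) / ∑ j ∈ s, (k j : ℝ)) ^ k i := by
  set K : ℝ := ∑ j ∈ s, (k j : ℝ)
  rcases (Finset.sum_nonneg fun j _ => Nat.cast_nonneg (k j) : 0 ≤ K).eq_or_lt with hK | hK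
  · have hk : ∀ i ∈ s, k i = 0 := fun i hi => by
      exact_mod_cast (Finset.sum_eq_zero_iff_of_nonneg fun j _ => Nat.cast_nonneg (k j)).mp
        hK.symm i hi
    rw [Finset.prod_eq_one fun i hi => by rw [hk i hi, pow_zero],
      Finset.prod_eq_one fun i hi => by rw [hk i hi, pow_zero]]
  set f : ι → ℝ := fun i => k i / K
  -- where `f i = 0` we get `z i = 0` from `x / 0 = 0`; such `i` have `k i = 0` and play no role
  set z : ι → ℝ := fun i => p i / f i
  have hf : ∀ i ∈ s, 0 ≤ f i := fun i _ => by positivity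
  have hz : ∀ i ∈ s, 0 ≤ z i := fun i hi => div_nonneg (hp i hi) (hf i hi)
  have hf_sum : ∑ i ∈ s, f i = 1 := by rw [← Finset.sum_div, div_self hK.ne']
  have hgeom : ∏ i ∈ s, z i ^ f i ≤ 1 := by
    refine (Real.geom_mean_le_arith_mean_weighted s f z hf hf_sum hz).trans
      (le_trans (Finset.sum_le_sum fun i hi => ?_) hp_sum)
    rcases (hf i hi).eq_or_lt with h | h
    · simp [z, ← h, hp i hi]
    · exact (mul_div_cancel₀ _ h.ne').le
  have hz_pow : ∏ i ∈ s, z i ^ k i ≤ 1 := by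
    have : ∏ i ∈ s, z i ^ k i = (∏ i ∈ s, z i ^ f i) ^ K := by
      rw [← Real.finsetProd_rpow _ _ fun i hi => Real.rpow_nonneg (hz i hi) _]
      refine Finset.prod_congr rfl fun i hi => ?_
      rw [← Real.rpow_mul (hz i hi), div_mul_cancel₀ _ hK.ne', Real.rpow_natCast]
    rw [this]
    exact Real.rpow_le_one (Finset.prod_nonneg fun i hi => Real.rpow_nonneg (hz i hi) _) hgeom
      hK.le
  have hsplit : ∏ i ∈ s, p i ^ k i = (∏ i ∈ s, f i ^ k i) * ∏ i ∈ s, z i ^ k i := by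
    rw [← Finset.prod_mul_distrib]
    refine Finset.prod_congr rfl fun i _ => ?_
    by_cases hki : k i = 0
    · simp [hki]
    · rw [← mul_pow, mul_div_cancel₀ _ (by positivity)]
  calc ∏ i ∈ s, p i ^ k i = (∏ i ∈ s, f i ^ k i) * ∏ i ∈ s, z i ^ k i := hsplit
    _ ≤ ∏ i ∈ s, f i ^ k i :=
      mul_le_of_le_one_right (Finset.prod_nonneg fun i hi => pow_nonneg (hf i hi) _) hz_pow

section Likelihood

variable [Fintype 𝒳] [DecidableEq 𝒳]

theorem prodProb_le_prodProb_empDist {m : ℕ} (x : Fin m → 𝒳) {P : 𝒳 → ℝ} (hP : IsPMF P) :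
    prodProb P x ≤ prodProb (empDist x) x := by
  have := prod_pow_le_prod_frequency_pow Finset.univ (count x) (fun a _ => hP.1 a) hP.2.le
  rw [← Nat.cast_sum, sum_count] at this
  simpa only [prodProb_eq_prod_pow_count, empDist_apply] using this

lemma prodProb_empDist {m : ℕ} (x : Fin m → 𝒳) :
    prodProb (empDist x) x = Real.exp (-(m : ℝ) * shEnt (empDist x)) := by
  have hexp : -(m : ℝ) * shEnt (empDist x) = ∑ a, (count x a : ℝ) * Real.log (empDist x a) := by
    simp only [shEnt, neg_mul_neg, Finset.mul_sum, ← mul_assoc, natCast_mul_empDist]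
  rw [hexp, Real.exp_sum, prodProb_eq_prod_pow_count]
  refine Finset.prod_congr rfl fun a _ => ?_
  by_cases ha : count x a = 0
  · simp [ha]
  · rw [Real.exp_nat_mul, Real.exp_log (empDist_pos ha)]

end Likelihood

section Entropy

variable [Fintype 𝒳]

lemma KL_eq_neg_shEnt_sub {P Q : 𝒳 → ℝ} (hPQ : ∀ x, P x ≠ 0 → Q x ≠ 0) :
    KL P Q = -shEnt P - ∑ x, P x * Real.log (Q x) := by
  rw [shEnt, neg_neg, ← Finset.sum_sub_distrib]
  refine Finset.sum_congr rfl fun x _ => ?_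
  by_cases hx : P x = 0
  · simp [hx]
  · rw [Real.log_div hx (hPQ x hx)]; ring

lemma KL_self (P : 𝒳 → ℝ) : KL P P = 0 := by
  rw [KL_eq_neg_shEnt_sub fun _ h => h, shEnt]; ring

theorem mul_shEnt_mix {Q₁ Q₂ : 𝒳 → ℝ} (hQ₁ : ∀ x, 0 ≤ Q₁ x) (hQ₂ : ∀ x, 0 ≤ Q₂ x) {a b : ℝ}
    (ha : 0 ≤ a) (hb : 0 < b) :
    (a + b) * shEnt (mix Q₁ Q₂ (a / b)) = b * GJS Q₁ Q₂ (a / b) + a * shEnt Q₁ + b * shEnt Q₂ := by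
  rcases ha.eq_or_lt with rfl | ha_pos
  · have : mix Q₁ Q₂ (0 / b) = Q₂ := by ext x; simp [mix]
    rw [GJS, this, KL_self]; ring
  set M := mix Q₁ Q₂ (a / b)
  have hM : ∀ x, (a + b) * M x = a * Q₁ x + b * Q₂ x := fun x => by
    simp only [M, mix]; field_simp; ring
  have hM₁ : ∀ x, Q₁ x ≠ 0 → M x ≠ 0 := fun x h hMx => by
    have := hM x; rw [hMx, mul_zero] at this
    nlinarith [(hQ₁ x).lt_of_ne' h, hQ₂ x]
  have hM₂ : ∀ x, Q₂ x ≠ 0 → M x ≠ 0 := fun x h hMx => by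
    have := hM x; rw [hMx, mul_zero] at this
    nlinarith [hQ₁ x, (hQ₂ x).lt_of_ne' h]
  have hH : (a + b) * shEnt M =
      -(a * ∑ x, Q₁ x * Real.log (M x) + b * ∑ x, Q₂ x * Real.log (M x)) := by
    simp only [shEnt, mul_neg, Finset.mul_sum, ← mul_assoc, hM, ← Finset.sum_add_distrib, add_mul]
  rw [GJS, KL_eq_neg_shEnt_sub hM₁, KL_eq_neg_shEnt_sub hM₂, hH]
  field_simp
  ring

end Entropy

variable [Fintype 𝒳] [DecidableEq 𝒳]

theorem product_probability_gjs_bound_general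
    (N n : ℕ) (hn : 0 < n) (v : Fin N → 𝒳) (w : Fin n → 𝒳) :
    (∀ P : 𝒳 → ℝ, IsPMF P →
      prodProb P v * prodProb P w ≤
        Real.exp (-(n : ℝ) * GJS (empDist v) (empDist w) ((N : ℝ) / n) -
          (N : ℝ) * shEnt (empDist v) - (n : ℝ) * shEnt (empDist w))) ∧
    prodProb (mix (empDist v) (empDist w) ((N : ℝ) / n)) v *
        prodProb (mix (empDist v) (empDist w) ((N : ℝ) / n)) w =
      Real.exp (-(n : ℝ) * GJS (empDist v) (empDist w) ((N : ℝ) / n) -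
        (N : ℝ) * shEnt (empDist v) - (n : ℝ) * shEnt (empDist w)) := by
  have hmix := (empDist_append v w hn.ne').symm
  have hexp : -(n : ℝ) * GJS (empDist v) (empDist w) ((N : ℝ) / n) -
      (N : ℝ) * shEnt (empDist v) - (n : ℝ) * shEnt (empDist w) =
      -((N + n : ℕ) : ℝ) * shEnt (empDist (Fin.append v w)) := by
    have := mul_shEnt_mix (empDist_nonneg v) (empDist_nonneg w) (Nat.cast_nonneg N)
      (Nat.cast_pos.mpr hn)
    rw [← hmix]
    push_cast
    linarith
  rw [hexp, ← prodProb_empDist, hmix, ← prodProb_append]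
  exact ⟨fun P hP => prodProb_append P v w ▸ prodProb_le_prodProb_empDist _ hP, rfl⟩

theorem product_probability_gjs_bound
    (N n : ℕ) (hN : 0 < N) (hn : 0 < n) (v : Fin N → 𝒳) (w : Fin n → 𝒳) :
    (∀ P : 𝒳 → ℝ, IsPMF P →
      prodProb P v * prodProb P w ≤
        Real.exp (-(n : ℝ) * GJS (empDist v) (empDist w) ((N : ℝ) / n) -
          (N : ℝ) * shEnt (empDist v) - (n : ℝ) * shEnt (empDist w))) ∧
    prodProb (mix (empDist v) (empDist w) ((N : ℝ) / n)) v *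
        prodProb (mix (empDist v) (empDist w) ((N : ℝ) / n)) w =
      Real.exp (-(n : ℝ) * GJS (empDist v) (empDist w) ((N : ℝ) / n) -
        (N : ℝ) * shEnt (empDist v) - (n : ℝ) * shEnt (empDist w)) :=
  product_probability_gjs_bound_general N n hn v w

end SeqClass
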